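/- For all integers n and k with 0 ≤ k ≤ n, Σ_{π ∈ OP(n,k)} q^{LOS(π)} = [k]!·S_q[n,k], where LOS(π) = los(π) + C(k,2). -/

import Mathlib

/-- The indeterminate `q`, as an element of the field of rational functions over `ℚ`. -/
noncomputable def qq : RatFunc ℚ := RatFunc.X

/-- The q-integer `[m] = 1 + q + ⋯ + q^(m-1)`. -/
noncomputable def qint (m : ℕ) : RatFunc ℚ := ∑ j ∈ Finset.range m, qq ^ j

/-- The q-factorial `[m]! = [m][m-1]⋯[1]`, with `[0]! = 1`. -/
noncomputable def qfac : ℕ → RatFunc ℚ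
  | 0 => 1
  | m + 1 => qint (m + 1) * qfac m

/-- The Gaussian binomial coefficient `[a]!/([b]!·[a-b]!)` (zero if `b > a`). -/
noncomputable def qbinom (a b : ℕ) : RatFunc ℚ :=
  if b ≤ a then qfac a / (qfac b * qfac (a - b)) else 0

/-- The q-Stirling number of the second kind. -/
noncomputable def qStirling (n k : ℕ) : RatFunc ℚ :=
  if k ≤ n then
    (∑ i ∈ Finset.range (k + 1),
      (-1 : RatFunc ℚ) ^ i * qbinom k i * qq ^ Nat.choose i 2 * qint (k - i) ^ n) / qfac k
  else 0

/-- Ordered partitions of `{1,…,n}` (encoded as `Fin n`) into `k` blocks: sequences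
`(B_1,…,B_k)` of pairwise disjoint nonempty subsets whose union is everything, i.e.
every letter lies in exactly one block. -/
def OP (n k : ℕ) : Finset (Fin k → Finset (Fin n)) :=
  Finset.univ.filter fun B =>
    (∀ j, (B j).Nonempty) ∧ ∀ x : Fin n, ∃ j, x ∈ B j ∧ ∀ j', x ∈ B j' → j' = j

/-- `ros(π)`: the number of pairs `(i,j)` of letters with `j < i`, `j` the opener
(least element) of its block, and the block of `j` strictly to the right of the
block of `i`. -/
def ros {n k : ℕ} (B : Fin k → Finset (Fin n)) : ℕ :=
  ((Finset.univ : Finset (Fin n × Fin n)).filter fun ij =>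
    ij.2 < ij.1 ∧ ∃ a b : Fin k, ij.1 ∈ B a ∧ ij.2 ∈ B b ∧ (B b).min = ↑ij.2 ∧ a < b).card

/-- `rcb(π)`: pairs `(i,j)` with `j > i`, `j` the closer (greatest element) of its block,
and the block of `j` strictly to the right of the block of `i`. -/
def rcb {n k : ℕ} (B : Fin k → Finset (Fin n)) : ℕ :=
  ((Finset.univ : Finset (Fin n × Fin n)).filter fun ij =>
    ij.1 < ij.2 ∧ ∃ a b : Fin k, ij.1 ∈ B a ∧ ij.2 ∈ B b ∧ (B b).max = ↑ij.2 ∧ a < b).card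

/-- `los(π)`: pairs `(i,j)` with `j < i`, `j` the opener of its block, and the block of
`j` strictly to the left of the block of `i`. -/
def los {n k : ℕ} (B : Fin k → Finset (Fin n)) : ℕ :=
  ((Finset.univ : Finset (Fin n × Fin n)).filter fun ij =>
    ij.2 < ij.1 ∧ ∃ a b : Fin k, ij.1 ∈ B a ∧ ij.2 ∈ B b ∧ (B b).min = ↑ij.2 ∧ b < a).card

/-- `lcb(π)`: pairs `(i,j)` with `j > i`, `j` the closer of its block, and the block of
`j` strictly to the left of the block of `i`. -/
def lcb {n k : ℕ} (B : Fin k → Finset (Fin n)) : ℕ :=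
  ((Finset.univ : Finset (Fin n × Fin n)).filter fun ij =>
    ij.1 < ij.2 ∧ ∃ a b : Fin k, ij.1 ∈ B a ∧ ij.2 ∈ B b ∧ (B b).max = ↑ij.2 ∧ b < a).card

/-!
Record an ordered partition by the word `f : Fin n → Fin k` sending each letter to the index of
its block: ordered partitions become surjective words, and `los` counts the pairs `j < i` where
`j` is the first occurrence of its letter and `f j < f i`.

Delete the last letter of a surjective word onto `k + 1` letters. What remains is a surjective
word onto `k + 1` letters, or, if the last letter was alone in its block, onto the other `k`
letters. In both cases `los` drops by exactly `f (last n)`, because each block to the left of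
the block of `last n` has its opener before it. So `A(n,k) = ∑ q ^ los` satisfies
`A(n+1,k+1) = [k+1] (A(n,k+1) + A(n,k))`. Then `q^(k choose 2) A(n,k)` satisfies the
recurrence `T(n+1,k+1) = [k+1] (T(n,k+1) + q^k T(n,k))` of the alternating sums
`T(n,k) = [k]! S_q[n,k]`, which follows from `[k+1] = [k+1-i] + q^(k+1-i) [i]` and q-Pascal. The
initial values agree because `∑ (-1)^i [k+1 choose i] q^(i choose 2) = 0`.
-/

open Finset Function

section Openers

variable {n : ℕ} {α : Type*}

def IsOpener (f : Fin n → α) (j : Fin n) : Prop := ∀ t < j, f t ≠ f j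

instance [DecidableEq α] (f : Fin n → α) : DecidablePred (IsOpener f) :=
  fun j => inferInstanceAs (Decidable (∀ t < j, f t ≠ f j))

theorem isOpener_comp_iff {β : Type*} {e : α → β} (he : Injective e) (f : Fin n → α)
    (j : Fin n) : IsOpener (e ∘ f) j ↔ IsOpener f j := by
  simp only [IsOpener, comp_apply, he.ne_iff]

theorem IsOpener.eq_of_apply_eq {f : Fin n → α} {x y : Fin n} (hx : IsOpener f x)
    (hy : IsOpener f y) (h : f x = f y) : x = y := by
  by_contra hne
  rcases lt_or_gt_of_ne hne with hlt | hlt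
  · exact hy x hlt h
  · exact hx y hlt h.symm

theorem exists_isOpener_apply_eq (f : Fin n → α) (x : Fin n) :
    ∃ y, IsOpener f y ∧ f y = f x := by
  classical
  obtain ⟨y, hy, hmin⟩ := exists_min_image {y | f y = f x} id ⟨x, by simp⟩
  simp only [mem_filter, mem_univ, true_and, id] at hy hmin
  exact ⟨y, fun t ht hft => (hmin t (hft.trans hy)).not_gt ht, hy⟩

theorem card_isOpener_apply_mem [DecidableEq α] (f : Fin n → α) {s : Finset α}
    (hs : ∀ v ∈ s, ∃ x, f x = v) : #{x | IsOpener f x ∧ f x ∈ s} = #s := by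
  refine card_nbij f (fun x hx => (mem_filter.mp hx).2.2) (fun x hx y hy h => ?_) fun v hv => ?_
  · exact (mem_filter.mp hx).2.1.eq_of_apply_eq (mem_filter.mp hy).2.1 h
  · obtain ⟨x, rfl⟩ := hs v hv
    obtain ⟨y, hy, hyx⟩ := exists_isOpener_apply_eq f x
    exact ⟨y, by simpa [hy, hyx] using hv, hyx⟩

theorem isOpener_snoc_castSucc (f : Fin n → α) (a : α) (j : Fin n) :
    IsOpener (Fin.snoc f a : Fin (n + 1) → α) j.castSucc ↔ IsOpener f j := by
  simp [IsOpener, Fin.forall_fin_succ', (Fin.castSucc_lt_last j).not_gt]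

variable [LinearOrder α]

def wordLos (f : Fin n → α) : ℕ :=
  #{ij : Fin n × Fin n | ij.2 < ij.1 ∧ IsOpener f ij.2 ∧ f ij.2 < f ij.1}

theorem wordLos_comp_strictMono {β : Type*} [LinearOrder β] {e : α → β} (he : StrictMono e)
    (f : Fin n → α) : wordLos (e ∘ f) = wordLos f := by
  simp only [wordLos, isOpener_comp_iff he.injective, comp_apply, he.lt_iff_lt]

theorem wordLos_snoc (f : Fin n → α) (a : α) :
    wordLos (Fin.snoc f a : Fin (n + 1) → α) = wordLos f + #{x | IsOpener f x ∧ f x < a} := by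
  simp only [wordLos, card_filter, Fintype.sum_prod_type, Fin.sum_univ_castSucc, Fin.snoc_castSucc,
    Fin.snoc_last, isOpener_snoc_castSucc, Fin.castSucc_lt_castSucc_iff, Fin.castSucc_lt_last,
    (Fin.castSucc_lt_last _).not_gt, lt_irrefl, false_and, if_false, true_and, add_zero]

end Openers

def surjections (n k : ℕ) : Finset (Fin n → Fin k) := {f | Surjective f}

theorem surjective_snoc_iff {n : ℕ} {β : Type*} (f : Fin n → β) (a : β) :
    Surjective (Fin.snoc f a : Fin (n + 1) → β) ↔ ∀ v ≠ a, ∃ x, f x = v := by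
  simp only [Surjective, Fin.exists_fin_succ', Fin.snoc_castSucc, Fin.snoc_last]
  exact forall_congr' fun v => ⟨fun h hv => h.resolve_right (Ne.symm hv),
    fun h => (eq_or_ne a v).elim Or.inr fun hv => Or.inl (h (Ne.symm hv))⟩

theorem surjective_snoc_and_not_surjective_iff {n k : ℕ} (f : Fin n → Fin (k + 1))
    (a : Fin (k + 1)) :
    Surjective (Fin.snoc f a : Fin (n + 1) → Fin (k + 1)) ∧ ¬Surjective f ↔
      ∃ g : Fin n → Fin k, Surjective g ∧ a.succAbove ∘ g = f := by
  rw [surjective_snoc_iff]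
  constructor
  · rintro ⟨hf, hnf⟩
    have hmiss : ∀ x, f x ≠ a := fun x hx =>
      hnf fun v => (eq_or_ne v a).elim (fun hv => ⟨x, hx.trans hv.symm⟩) (hf v)
    choose g hg using fun x => Fin.exists_succAbove_eq (hmiss x)
    refine ⟨g, fun w => ?_, funext hg⟩
    obtain ⟨x, hx⟩ := hf _ (Fin.succAbove_ne a w)
    exact ⟨x, a.succAbove_right_injective ((hg x).trans hx)⟩
  · rintro ⟨g, hg, rfl⟩
    refine ⟨fun v hv => ?_, fun h => ?_⟩
    · obtain ⟨w, rfl⟩ := Fin.exists_succAbove_eq hv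
      obtain ⟨x, rfl⟩ := hg w
      exact ⟨x, rfl⟩
    · obtain ⟨x, hx⟩ := h a
      exact Fin.succAbove_ne a (g x) hx

theorem wordLos_snoc_of_surjective {n k : ℕ} {f : Fin n → Fin (k + 1)} {a : Fin (k + 1)}
    (hf : Surjective (Fin.snoc f a : Fin (n + 1) → Fin (k + 1))) :
    wordLos (Fin.snoc f a : Fin (n + 1) → Fin (k + 1)) = wordLos f + a := by
  have hcard := card_isOpener_apply_mem f (s := Iio a)
    fun v hv => (surjective_snoc_iff f a).mp hf v (mem_Iio.mp hv).ne
  rw [wordLos_snoc]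
  simpa using hcard

theorem filter_surjective_snoc_not_surjective {n k : ℕ} (a : Fin (k + 1)) :
    ({f | Surjective (Fin.snoc f a : Fin (n + 1) → Fin (k + 1)) ∧
        ¬Surjective f} : Finset (Fin n → Fin (k + 1))) =
      (surjections n k).map
        ⟨(a.succAbove ∘ ·), (Fin.strictMono_succAbove a).injective.comp_left⟩ := by
  ext f
  simp [surjections, surjective_snoc_and_not_surjective_iff]

theorem sum_surjective_snoc {R : Type*} [CommSemiring R] (q : R) {n k : ℕ} (a : Fin (k + 1)) :
    ∑ f ∈ ({f | Surjective (Fin.snoc f a : Fin (n + 1) → Fin (k + 1))} :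
        Finset (Fin n → Fin (k + 1))), q ^ wordLos (Fin.snoc f a : Fin (n + 1) → Fin (k + 1)) =
      q ^ (a : ℕ) *
        (∑ f ∈ surjections n (k + 1), q ^ wordLos f + ∑ g ∈ surjections n k, q ^ wordLos g) := by
  rw [sum_congr rfl fun f hf => by rw [wordLos_snoc_of_surjective (mem_filter.mp hf).2, pow_add],
    ← sum_mul, mul_comm, ← sum_filter_add_sum_filter_not _ Surjective, filter_filter,
    filter_filter, filter_surjective_snoc_not_surjective, sum_map]
  congr 2
  · refine sum_congr (filter_congr fun f _ => ?_) fun _ _ => rfl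
    exact and_iff_right_of_imp fun hf => (surjective_snoc_iff f a).mpr fun v _ => hf v
  · refine sum_congr rfl fun g _ => ?_
    exact congrArg (q ^ ·) (wordLos_comp_strictMono (Fin.strictMono_succAbove a) g)

theorem sum_surjections_succ_succ {R : Type*} [CommSemiring R] (q : R) (n k : ℕ) :
    ∑ f ∈ surjections (n + 1) (k + 1), q ^ wordLos f =
      (∑ a : Fin (k + 1), q ^ (a : ℕ)) *
        (∑ f ∈ surjections n (k + 1), q ^ wordLos f + ∑ g ∈ surjections n k, q ^ wordLos g) := by
  rw [sum_mul, ← Fintype.sum_congr _ _ fun a => sum_surjective_snoc q a, surjections, sum_filter,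
    ← Fintype.sum_equiv (Fin.snocEquiv fun _ => Fin (k + 1)) _ _ fun _ => rfl,
    Fintype.sum_prod_type]
  simp only [sum_filter]
  rfl

def fibers {n k : ℕ} (f : Fin n → Fin k) (j : Fin k) : Finset (Fin n) := {x | f x = j}

@[simp]
theorem mem_fibers {n k : ℕ} {f : Fin n → Fin k} {j : Fin k} {x : Fin n} :
    x ∈ fibers f j ↔ f x = j := by
  simp [fibers]

theorem fibers_injective (n k : ℕ) : Injective (@fibers n k) := by
  intro f g h
  funext x
  have hx : x ∈ fibers g (f x) := h ▸ mem_fibers.mpr rfl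
  exact (mem_fibers.mp hx).symm

theorem OP_eq_map_fibers (n k : ℕ) :
    OP n k = (surjections n k).map ⟨fibers, fibers_injective n k⟩ := by
  ext B
  simp only [OP, surjections, mem_filter, mem_univ, true_and, mem_map, Embedding.coeFn_mk]
  constructor
  · rintro ⟨hne, hpart⟩
    choose f hf using hpart
    refine ⟨f, fun j => ?_, funext fun j => ?_⟩
    · obtain ⟨x, hx⟩ := hne j
      exact ⟨x, ((hf x).2 j hx).symm⟩
    · ext x
      exact ⟨fun h => mem_fibers.mp h ▸ (hf x).1, fun hx => mem_fibers.mpr ((hf x).2 j hx).symm⟩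
  · rintro ⟨f, hf, rfl⟩
    refine ⟨fun j => ?_, fun x => ⟨f x, mem_fibers.mpr rfl, fun j hj => (mem_fibers.mp hj).symm⟩⟩
    obtain ⟨x, rfl⟩ := hf j
    exact ⟨x, mem_fibers.mpr rfl⟩

theorem min_fibers_eq_iff {n k : ℕ} (f : Fin n → Fin k) (j : Fin k) (x : Fin n) :
    (fibers f j).min = x ↔ f x = j ∧ IsOpener f x := by
  constructor
  · intro h
    have hx := mem_fibers.mp (mem_of_min h)
    exact ⟨hx, fun t ht hft => notMem_of_lt_min ht h (mem_fibers.mpr (hft.trans hx))⟩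
  · rintro ⟨hx, hop⟩
    refine le_antisymm (min_le (mem_fibers.mpr hx)) (Finset.le_min fun y hy => ?_)
    exact WithTop.coe_le_coe.mpr <| not_lt.mp fun hlt =>
      hop y hlt ((mem_fibers.mp hy).trans hx.symm)

theorem los_fibers {n k : ℕ} (f : Fin n → Fin k) : los (fibers f) = wordLos f := by
  unfold los wordLos
  congr 1
  refine filter_congr fun ij _ => and_congr_right fun _ => ?_
  simp [min_fibers_eq_iff]

theorem qint_ne_zero {m : ℕ} (hm : 0 < m) : qint m ≠ 0 := by
  have hpoly :
      qint m = algebraMap (Polynomial ℚ) (RatFunc ℚ) (∑ j ∈ range m, Polynomial.X ^ j) := by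
    simp [qint, qq, RatFunc.algebraMap_X]
  rw [hpoly, ne_eq, FaithfulSMul.algebraMap_eq_zero_iff]
  intro h
  simpa [Polynomial.eval_finsetSum, hm.ne'] using congrArg (Polynomial.eval 1) h

theorem qfac_ne_zero (m : ℕ) : qfac m ≠ 0 := by
  induction m with
  | zero => exact one_ne_zero
  | succ m ih => exact mul_ne_zero (qint_ne_zero m.succ_pos) ih

theorem qint_zero : qint 0 = 0 := sum_range_zero _

theorem qint_add (a b : ℕ) : qint (a + b) = qint a + qq ^ a * qint b := by
  simp only [qint, sum_range_add, mul_sum, pow_add]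

theorem qint_eq_sum_fin (m : ℕ) : qint m = ∑ a : Fin m, qq ^ (a : ℕ) :=
  (Fin.sum_univ_eq_sum_range (qq ^ ·) m).symm

theorem qbinom_zero_right (k : ℕ) : qbinom k 0 = 1 := by
  simp [qbinom, qfac, qfac_ne_zero]

theorem qbinom_of_lt {k i : ℕ} (h : k < i) : qbinom k i = 0 := if_neg h.not_ge

theorem qbinom_succ_succ_mul_qint {k i : ℕ} (h : i ≤ k) :
    qbinom (k + 1) (i + 1) * qint (i + 1) = qint (k + 1) * qbinom k i := by
  have := qint_ne_zero i.succ_pos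
  have := qfac_ne_zero i
  have := qfac_ne_zero (k - i)
  simp only [qbinom, if_pos h, if_pos (Nat.succ_le_succ h), Nat.add_sub_add_right, qfac]
  field_simp

theorem qbinom_succ_succ {k i : ℕ} (h : i ≤ k) :
    qbinom (k + 1) (i + 1) = qq ^ (i + 1) * qbinom k (i + 1) + qbinom k i := by
  obtain rfl | hlt := h.eq_or_lt
  · simp [qbinom, qfac, qfac_ne_zero, qint_ne_zero]
  obtain ⟨m, rfl⟩ := Nat.exists_eq_add_of_lt hlt
  have := qint_ne_zero i.succ_pos
  have := qint_ne_zero m.succ_pos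
  have := qfac_ne_zero i
  have := qfac_ne_zero m
  have hsplit : qint (i + m + 1 + 1) = qint (i + 1) + qq ^ (i + 1) * qint (m + 1) := by
    rw [← qint_add]; ring_nf
  simp only [qbinom, if_pos hlt.le, if_pos (by omega : i + 1 ≤ i + m + 1),
    if_pos (by omega : i + 1 ≤ i + m + 1 + 1),
    show i + m + 1 + 1 - (i + 1) = m + 1 by omega, show i + m + 1 - i = m + 1 by omega,
    show i + m + 1 - (i + 1) = m by omega, qfac, hsplit]
  field_simp
  ring

theorem choose_two_succ (i : ℕ) : (i + 1).choose 2 = i.choose 2 + i := by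
  rw [Nat.choose_succ_succ', Nat.choose_one_right, add_comm]

theorem sum_range_alternating_qbinom (k : ℕ) :
    ∑ i ∈ range (k + 2), (-1 : RatFunc ℚ) ^ i * qbinom (k + 1) i * qq ^ i.choose 2 = 0 := by
  set g : ℕ → RatFunc ℚ := fun i => (-1) ^ i * qbinom k i * qq ^ (i.choose 2 + i)
  have htelescope : ∀ j ∈ range (k + 1),
      (-1 : RatFunc ℚ) ^ (j + 1) * qbinom (k + 1) (j + 1) * qq ^ (j + 1).choose 2 =
        g (j + 1) - g j := by
    intro j hj
    simp only [g, qbinom_succ_succ (mem_range_succ_iff.mp hj), choose_two_succ, pow_succ, pow_add]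
    ring
  rw [sum_range_succ', sum_congr rfl htelescope, sum_range_sub]
  simp [g, qbinom_zero_right, qbinom_of_lt (Nat.lt_succ_self k)]

noncomputable def qfacMulStirling (n k : ℕ) : RatFunc ℚ :=
  ∑ i ∈ range (k + 1), (-1 : RatFunc ℚ) ^ i * qbinom k i * qq ^ i.choose 2 * qint (k - i) ^ n

theorem qfac_mul_qStirling {n k : ℕ} (h : k ≤ n) :
    qfac k * qStirling n k = qfacMulStirling n k := by
  rw [qStirling, if_pos h]
  exact mul_div_cancel₀ _ (qfac_ne_zero k)

theorem qfacMulStirling_zero_right (n : ℕ) : qfacMulStirling n 0 = 0 ^ n := by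
  simp [qfacMulStirling, qbinom_zero_right, qint_zero]

theorem qfacMulStirling_zero_succ (k : ℕ) : qfacMulStirling 0 (k + 1) = 0 := by
  simpa [qfacMulStirling] using sum_range_alternating_qbinom k

theorem qfacMulStirling_succ_succ (n k : ℕ) :
    qfacMulStirling (n + 1) (k + 1) =
      qint (k + 1) * (qfacMulStirling n (k + 1) + qq ^ k * qfacMulStirling n k) := by
  set c : ℕ → RatFunc ℚ := fun i => (-1) ^ i * qbinom (k + 1) i * qq ^ i.choose 2
  have hsplit : ∀ i ∈ range (k + 2), c i * qint (k + 1 - i) ^ (n + 1) =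
      qint (k + 1) * (c i * qint (k + 1 - i) ^ n) -
        c i * qint i * qq ^ (k + 1 - i) * qint (k + 1 - i) ^ n := by
    intro i hi
    have hik := mem_range_succ_iff.mp hi
    rw [← Nat.sub_add_cancel hik, qint_add, Nat.sub_add_cancel hik]
    ring
  have hshift : ∀ j ∈ range (k + 1),
      c (j + 1) * qint (j + 1) * qq ^ (k + 1 - (j + 1)) * qint (k + 1 - (j + 1)) ^ n =
        -(qint (k + 1) *
          (qq ^ k * ((-1) ^ j * qbinom k j * qq ^ j.choose 2 * qint (k - j) ^ n))) := by
    intro j hj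
    have hjk := mem_range_succ_iff.mp hj
    have hpow : qq ^ k = qq ^ j * qq ^ (k - j) := by rw [← pow_add, Nat.add_sub_cancel' hjk]
    simp only [c, hpow, choose_two_succ, pow_add, pow_succ, Nat.add_sub_add_right]
    linear_combination -(-1) ^ j * qq ^ j.choose 2 * qq ^ j * qq ^ (k - j) * qint (k - j) ^ n *
      qbinom_succ_succ_mul_qint hjk
  simp only [qfacMulStirling]
  rw [sum_congr rfl hsplit, sum_sub_distrib, ← mul_sum,
    sum_range_succ' (fun i => c i * qint i * qq ^ (k + 1 - i) * qint (k + 1 - i) ^ n),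
    sum_congr rfl hshift]
  simp [c, qint_zero, mul_sum, mul_add, mul_assoc]

theorem qpow_choose_two_mul_sum_surjections (n k : ℕ) :
    qq ^ k.choose 2 * ∑ f ∈ surjections n k, qq ^ wordLos f = qfacMulStirling n k := by
  induction n generalizing k with
  | zero =>
    cases k with
    | zero => simp [surjections, Surjective, qfacMulStirling_zero_right, wordLos]
    | succ k => simp [surjections, Surjective, qfacMulStirling_zero_succ]
  | succ n ih =>
    cases k with
    | zero => simp [surjections, qfacMulStirling_zero_right]
    | succ k =>
      rw [sum_surjections_succ_succ, qfacMulStirling_succ_succ, ← ih, ← ih, choose_two_succ,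
        qint_eq_sum_fin]
      ring

/-- `LOS = los + C(k,2)` is Euler-Mahonian on ordered partitions:
`∑_{π ∈ OP(n,k)} q^(LOS π) = [k]!·S_q[n,k]` for `0 ≤ k ≤ n`. -/
theorem sum_LOS_eq (n k : ℕ) (hkn : k ≤ n) :
    ∑ B ∈ OP n k, qq ^ (los B + Nat.choose k 2) = qfac k * qStirling n k := by
  simp only [OP_eq_map_fibers, sum_map, Embedding.coeFn_mk, los_fibers, pow_add, ← sum_mul]
  rw [qfac_mul_qStirling hkn, ← qpow_choose_two_mul_sum_surjections, mul_comm]
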